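/- arXiv:2406.10463 — 3 statements merged into one kernel-verified Lean document; each statement's English description precedes it below -/
import Mathlib

section
/- Let T be a standard finite tree, f a standard function on T, and β < δ < α ordinals in ht[T]. Suppose X ⊆ T_α has unique drop-downs to β and X↾β and X are f-consistent. Then X↾δ has unique drop-downs to β, and X↾β and X↾δ are f-consistent. -/
noncomputable section
open scoped Classical

namespace AKST

/-- The first uncountable ordinal. -/
def ω1 : Ordinal := (Cardinal.aleph 1).ord

/-- The second uncountable ordinal. -/
def ω2 : Ordinal := (Cardinal.aleph 2).ord

/-- The height of a countable ordinal `γ`: the unique `α` with `ω·α ≤ γ < ω·(α+1)`. -/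
def ht (γ : Ordinal) : Ordinal := γ / Ordinal.omega0

/-- A standard finite tree. -/
structure SFT where
  elems : Finset Ordinal
  lt : Ordinal → Ordinal → Prop
  zero_mem : 0 ∈ elems
  mem_ok : ∀ x ∈ elems, x = 0 ∨ (Ordinal.omega0 ≤ x ∧ x < ω1)
  lt_mem : ∀ {x y}, lt x y → x ∈ elems ∧ y ∈ elems
  lt_trans' : ∀ {x y z}, lt x y → lt y z → lt x z
  lt_irrefl' : ∀ x, ¬ lt x x
  pred_linear : ∀ {x y z}, lt y x → lt z x → lt y z ∨ y = z ∨ lt z y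
  lt_ht : ∀ {x y}, lt x y → ht x < ht y
  pred_level : ∀ x ∈ elems, ∀ α, (∃ z ∈ elems, ht z = α) → α < ht x →
    ∃ y ∈ elems, ht y = α ∧ lt y x

namespace SFT

/-- The non-strict tree order. -/
def le (T : SFT) (x y : Ordinal) : Prop := T.lt x y ∨ (x = y ∧ x ∈ T.elems)

/-- `ht[T]`: the set of nonzero heights of elements of `T`. -/
def heights (T : SFT) : Set Ordinal := {α | α ≠ 0 ∧ ∃ x ∈ T.elems, ht x = α}

/-- Level `α` of `T`. -/
def level (T : SFT) (α : Ordinal) : Set Ordinal := {x | x ∈ T.elems ∧ ht x = α}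

/-- `max(ht[T])`. -/
def maxHeight (T : SFT) : Ordinal := sSup T.heights

/-- The least element of `ht[T]` greater than `α`. -/
def minAbove (T : SFT) (α : Ordinal) : Ordinal := sInf {β | β ∈ T.heights ∧ α < β}

/-- The drop-down `x↾α`: the unique element of `T` of height `α` below `x`. -/
def drop (T : SFT) (α x : Ordinal) : Ordinal :=
  if h : ∃ y, y ∈ T.elems ∧ ht y = α ∧ T.lt y x then h.choose else 0

/-- `z` is the meet of `x` and `y` in `T`. -/
def isMeet (T : SFT) (x y z : Ordinal) : Prop :=
  T.le z x ∧ T.le z y ∧ ∀ w, T.le w x → T.le w y → T.le w z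

/-- The meet `x ∧_T y`. -/
def meet (T : SFT) (x y : Ordinal) : Ordinal :=
  if h : ∃ z, T.isMeet x y z then h.choose else 0

/-- `U` extends `T`. -/
def Ext (T U : SFT) : Prop :=
  (↑T.elems : Set Ordinal) ⊆ ↑U.elems ∧ ∀ {x y}, T.lt x y → U.lt x y

/-- `X` has unique drop-downs to `α` in `T`. -/
def UniqueDrops (T : SFT) (α : Ordinal) (X : Set Ordinal) : Prop :=
  ∀ x ∈ X, ∀ y ∈ X, T.drop α x = T.drop α y → x = y

/-- `U` is a simple extension of `T`. -/
def SimpleExt (U T : SFT) : Prop :=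
  Ext T U ∧
  (∀ x ∈ U.elems, x ∉ T.elems → ht x ∉ T.heights) ∧
  (∀ α, α ∈ U.heights → α ∉ T.heights → α < T.maxHeight →
     U.UniqueDrops α (T.level (T.minAbove α)))

/-- `x` and `y` are incomparable in `T`. -/
def Incomp (T : SFT) (x y : Ordinal) : Prop := x ≠ y ∧ ¬ T.lt x y ∧ ¬ T.lt y x

/-- `T` is normal: every element has successors at every higher occupied level. -/
def Normal (T : SFT) : Prop :=
  ∀ x ∈ T.elems, ∀ γ ∈ T.heights, ht x < γ → ∃ y ∈ T.elems, ht y = γ ∧ T.lt x y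

end SFT

/-! Partial functions on a tree, represented by their graphs. -/

def dom (f : Set (Ordinal × Ordinal)) : Set Ordinal := {x | ∃ y, (x, y) ∈ f}

def ran (f : Set (Ordinal × Ordinal)) : Set Ordinal := {y | ∃ x, (x, y) ∈ f}

/-- The graph is single-valued. -/
def FuncGraph (f : Set (Ordinal × Ordinal)) : Prop :=
  ∀ {x y y'}, (x, y) ∈ f → (x, y') ∈ f → y = y'

/-- The graph is injective. -/
def InjGraph (f : Set (Ordinal × Ordinal)) : Prop :=
  ∀ {x x' y}, (x, y) ∈ f → (x', y) ∈ f → x = x'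

/-- The graph is a partial function from `T` to `T`. -/
def Carr (T : SFT) (f : Set (Ordinal × Ordinal)) : Prop :=
  ∀ p ∈ f, p.1 ∈ T.elems ∧ p.2 ∈ T.elems

/-- Strictly increasing. -/
def StrictIncr (T : SFT) (f : Set (Ordinal × Ordinal)) : Prop :=
  ∀ {x y x' y'}, (x, y) ∈ f → (x', y') ∈ f → T.lt x x' → T.lt y y'

/-- Level preserving. -/
def LevelPres (f : Set (Ordinal × Ordinal)) : Prop :=
  ∀ p ∈ f, ht p.1 = ht p.2

/-- Downwards closed (the domain is closed under drop-downs). -/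
def DownClosedDom (T : SFT) (f : Set (Ordinal × Ordinal)) : Prop :=
  ∀ x y, (x, y) ∈ f → ∀ β ∈ T.heights, β < ht x →
    ∃ x' y', x' ∈ T.elems ∧ ht x' = β ∧ T.lt x' x ∧ (x', y') ∈ f

/-- No fixed points other than 0. -/
def NoFix (f : Set (Ordinal × Ordinal)) : Prop := ∀ x, (x, x) ∈ f → x = 0

/-- `f` is a standard function on `T`. -/
def IsStdFun (T : SFT) (f : Set (Ordinal × Ordinal)) : Prop :=
  Carr T f ∧ FuncGraph f ∧ InjGraph f ∧ StrictIncr T f ∧ LevelPres f ∧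
    DownClosedDom T f ∧ NoFix f

/-- `f^m(x) = y`, for `m ∈ {-1, 1}`. -/
def appPow (f : Set (Ordinal × Ordinal)) (m : ℤ) (x y : Ordinal) : Prop :=
  (m = 1 ∧ (x, y) ∈ f) ∨ (m = -1 ∧ (y, x) ∈ f)

/-- `X↾α` and `X` are `f`-consistent. -/
def Consistent (T : SFT) (f : Set (Ordinal × Ordinal)) (α : Ordinal) (X : Set Ordinal) : Prop :=
  ∀ x ∈ X, ∀ y ∈ X, ((T.drop α x, T.drop α y) ∈ f ↔ (x, y) ∈ f)

/-- The family `{F τ : τ ∈ A}` is separated on the tuple `a 0, ..., a (n-1)`. -/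
def SepOnTuple (F : Ordinal → Set (Ordinal × Ordinal)) (A : Finset Ordinal)
    (n : ℕ) (a : ℕ → Ordinal) : Prop :=
  ∀ i < n, ∀ j₀ < i, ∀ j₁ < i, ∀ m₀ m₁ : ℤ, ∀ τ₀ ∈ A, ∀ τ₁ ∈ A,
    (m₀ = 1 ∨ m₀ = -1) → (m₁ = 1 ∨ m₁ = -1) →
    appPow (F τ₀) m₀ (a i) (a j₀) → appPow (F τ₁) m₁ (a i) (a j₁) →
    j₀ = j₁ ∧ m₀ = m₁ ∧ τ₀ = τ₁

/-- The family is separated on the set `X`. -/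
def SepOnSet (F : Ordinal → Set (Ordinal × Ordinal)) (A : Finset Ordinal)
    (X : Set Ordinal) : Prop :=
  ∃ (n : ℕ) (a : ℕ → Ordinal), (∀ i < n, ∀ j < n, a i = a j → i = j) ∧
    X = a '' {i | i < n} ∧ SepOnTuple F A n a

/-- The family is `ρ`-separated on the tuple `a 0, ..., a (n-1)` (of elements of level `α`). -/
def RhoSepOnTuple (ρ : Ordinal → Ordinal → Ordinal) (F : Ordinal → Set (Ordinal × Ordinal))
    (A : Finset Ordinal) (α : Ordinal) (n : ℕ) (a : ℕ → Ordinal) : Prop :=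
  ∀ i < n, ∀ j₀ < i, ∀ j₁ < i, ∀ m₀ m₁ : ℤ, ∀ τ₀ ∈ A, ∀ τ₁ ∈ A,
    (m₀ = 1 ∨ m₀ = -1) → (m₁ = 1 ∨ m₁ = -1) →
    appPow (F τ₀) m₀ (a i) (a j₀) → appPow (F τ₁) m₁ (a i) (a j₁) →
    j₀ = j₁ ∧ ((m₀ = m₁ ∧ τ₀ = τ₁) ∨ α ≤ ρ τ₀ τ₁)

/-- The family is `ρ`-separated on the set `X ⊆ T_α`. -/
def RhoSepOnSet (ρ : Ordinal → Ordinal → Ordinal) (F : Ordinal → Set (Ordinal × Ordinal))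
    (A : Finset Ordinal) (α : Ordinal) (X : Set Ordinal) : Prop :=
  ∃ (n : ℕ) (a : ℕ → Ordinal), (∀ i < n, ∀ j < n, a i = a j → i = j) ∧
    X = a '' {i | i < n} ∧ RhoSepOnTuple ρ F A α n a

/-- There is a loop in `X` with respect to the family `{F τ : τ ∈ A}`. -/
def HasLoop (F : Ordinal → Set (Ordinal × Ordinal)) (A : Finset Ordinal)
    (X : Set Ordinal) : Prop :=
  ∃ p : ℕ, 4 ≤ p ∧ ∃ c : ℕ → Ordinal,
    (∀ i < p, c i ∈ X) ∧
    (∀ i < p - 1, ∀ j < p - 1, c i = c j → i = j) ∧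
    c 0 = c (p - 1) ∧
    (∀ i < p - 1, ∃ τ ∈ A, ∃ m : ℤ, (m = 1 ∨ m = -1) ∧ appPow (F τ) m (c i) (c (i + 1)))

/-- `p` is a member of `T ⊗ T`. -/
def InOtimes (T : SFT) (p : Ordinal × Ordinal) : Prop :=
  p.1 ∈ T.elems ∧ p.2 ∈ T.elems ∧ ht p.1 = ht p.2

/-- `f ⊆ T ⊗ T` is downwards closed as a subset of `T ⊗ T`. -/
def DCPairs (T : SFT) (f : Set (Ordinal × Ordinal)) : Prop :=
  ∀ p ∈ f, ∀ q, InOtimes T q → T.le q.1 p.1 → T.le q.2 p.2 → q ∈ f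

/-- The downward closure of `f` in `U`. -/
def dcl (U : SFT) (f : Set (Ordinal × Ordinal)) : Set (Ordinal × Ordinal) :=
  {p | InOtimes U p ∧ ∃ q ∈ f, U.le p.1 q.1 ∧ U.le p.2 q.2}

end AKST

open AKST AKST.SFT

/-- If `y` is an element of `T` at level `γ` strictly below `x`, then `T.drop γ x = y`. -/
lemma drop_eq_of (T : SFT) {γ x y : Ordinal} (hy : y ∈ T.elems) (hht : ht y = γ)
    (hlt : T.lt y x) : T.drop γ x = y := by
  have h : ∃ z, z ∈ T.elems ∧ ht z = γ ∧ T.lt z x := ⟨y, hy, hht, hlt⟩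
  rw [SFT.drop, dif_pos h]
  obtain ⟨_, hz2, hz3⟩ := h.choose_spec
  rcases T.pred_linear hz3 hlt with h' | h' | h'
  · exact absurd (T.lt_ht h') (by rw [hz2, hht]; exact lt_irrefl γ)
  · exact h'
  · exact absurd (T.lt_ht h') (by rw [hht, hz2]; exact lt_irrefl γ)

/-- Existence of drop-downs: any element of `T` has a predecessor at any occupied
lower level. -/
lemma drop_spec (T : SFT) {γ x : Ordinal} (hx : x ∈ T.elems) (hγ : γ ∈ T.heights)
    (hlt : γ < ht x) :
    T.drop γ x ∈ T.elems ∧ ht (T.drop γ x) = γ ∧ T.lt (T.drop γ x) x := by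
  obtain ⟨y, hy, hht, hylt⟩ := T.pred_level x hx γ hγ.2 hlt
  rw [drop_eq_of T hy hht hylt]
  exact ⟨hy, hht, hylt⟩

/-- consistency drops down: if `X ⊆ T_α` has unique drop-downs to `β` and
`X↾β` and `X` are `f`-consistent, with `β < δ < α` in `ht[T]`, then `X↾δ` has unique
drop-downs to `β` and `X↾β` and `X↾δ` are `f`-consistent. -/
theorem stmt_17 (T : SFT) (f : Set (Ordinal × Ordinal)) (hf : IsStdFun T f)
    (β δ α : Ordinal) (hβδ : β < δ) (hδα : δ < α)
    (hβ : β ∈ T.heights) (hδ : δ ∈ T.heights) (hα : α ∈ T.heights)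
    (X : Set Ordinal) (hX : X ⊆ T.level α)
    (hud : UniqueDrops T β X) (hcons : Consistent T f β X) :
    UniqueDrops T β (T.drop δ '' X) ∧ Consistent T f β (T.drop δ '' X) := by
  obtain ⟨hcarr, hfun, hinj, hsi, hlp, hdc, hnf⟩ := hf
  -- Basic facts about each x ∈ X and its drops
  have key : ∀ x ∈ X, T.drop δ x ∈ T.elems ∧ ht (T.drop δ x) = δ ∧ T.lt (T.drop δ x) x ∧
      T.drop β (T.drop δ x) = T.drop β x := by
    intro x hx
    obtain ⟨hxm, hxh⟩ := hX hx
    have hδs := drop_spec T hxm hδ (by rw [hxh]; exact hδα)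
    have hβs := drop_spec T hxm hβ (by rw [hxh]; exact hβδ.trans hδα)
    refine ⟨hδs.1, hδs.2.1, hδs.2.2, ?_⟩
    -- drop β x is below drop δ x
    have hlin := T.pred_linear hβs.2.2 hδs.2.2
    have hlt : T.lt (T.drop β x) (T.drop δ x) := by
      rcases hlin with h' | h' | h'
      · exact h'
      · exact absurd hβδ (by rw [← hβs.2.1, h', hδs.2.1]; exact lt_irrefl δ)
      · exact absurd (T.lt_ht h') (by rw [hβs.2.1, hδs.2.1]; exact not_lt.2 hβδ.le)
    exact drop_eq_of T hβs.1 hβs.2.1 hlt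
  -- the central equivalence: (drop δ x, drop δ y) ∈ f ↔ (x, y) ∈ f
  have equiv : ∀ x ∈ X, ∀ y ∈ X, ((T.drop δ x, T.drop δ y) ∈ f ↔ (x, y) ∈ f) := by
    intro x hx y hy
    obtain ⟨hxm, hxh⟩ := hX hx
    obtain ⟨hym, hyh⟩ := hX hy
    obtain ⟨hdxm, hdxh, hdxlt, hdxβ⟩ := key x hx
    obtain ⟨hdym, hdyh, hdylt, hdyβ⟩ := key y hy
    constructor
    · intro hmem
      -- drop down to level β
      obtain ⟨x', y', hx'm, hx'h, hx'lt, hx'y'⟩ :=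
        hdc _ _ hmem β hβ (by rw [hdxh]; exact hβδ)
      have hx' : x' = T.drop β x := by
        rw [← hdxβ]; exact (drop_eq_of T hx'm hx'h hx'lt).symm
      have hy'lt : T.lt y' (T.drop δ y) := hsi hx'y' hmem hx'lt
      have hy'm : y' ∈ T.elems := (hcarr _ hx'y').2
      have hy'h : ht y' = β := by
        have := hlp _ hx'y'; simp only at this; rw [← this, hx'h]
      have hy' : y' = T.drop β y := by
        rw [← hdyβ]; exact (drop_eq_of T hy'm hy'h hy'lt).symm
      have : (T.drop β x, T.drop β y) ∈ f := by rw [← hx', ← hy']; exact hx'y'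
      exact (hcons x hx y hy).1 this
    · intro hmem
      obtain ⟨x', y', hx'm, hx'h, hx'lt, hx'y'⟩ :=
        hdc _ _ hmem δ hδ (by rw [hxh]; exact hδα)
      have hx' : x' = T.drop δ x := (drop_eq_of T hx'm hx'h hx'lt).symm
      have hy'lt : T.lt y' y := hsi hx'y' hmem hx'lt
      have hy'm : y' ∈ T.elems := (hcarr _ hx'y').2
      have hy'h : ht y' = δ := by
        have := hlp _ hx'y'; simp only at this; rw [← this, hx'h]
      have hy' : y' = T.drop δ y := (drop_eq_of T hy'm hy'h hy'lt).symm
      rw [← hx', ← hy']; exact hx'y'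
  constructor
  · rintro _ ⟨x, hx, rfl⟩ _ ⟨y, hy, rfl⟩ heq
    rw [(key x hx).2.2.2, (key y hy).2.2.2] at heq
    rw [hud x hx y hy heq]
  · rintro _ ⟨x, hx, rfl⟩ _ ⟨y, hy, rfl⟩
    rw [(key x hx).2.2.2, (key y hy).2.2.2, equiv x hx y hy]
    exact hcons x hx y hy
end
end

section
/- Let T and U be standard finite trees with U an extension of T such that ht[U] ∩ (max(ht[T]) + 1) = ht[T], and let f be a standard function on T. Then f is a standard function on U. -/
noncomputable section
open scoped Classical

open AKST AKST.SFT

/-- if `U` extends `T` with `ht[U] ∩ (max(ht[T])+1) = ht[T]`, then every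
standard function on `T` is a standard function on `U`. -/
theorem stmt_18 (T U : SFT) (f : Set (Ordinal × Ordinal))
    (hext : Ext T U) (hh : U.heights ∩ Set.Iic T.maxHeight = T.heights)
    (hf : IsStdFun T f) : IsStdFun U f := by
  obtain ⟨hc, hfg, hig, hsi, hlp, hdc, hnf⟩ := hf
  have hlt : ∀ {x y}, x ∈ T.elems → y ∈ T.elems → U.lt x y → T.lt x y := by
    intro x y hx hy hxy
    obtain ⟨y0, hy0, hhy0, hlty0⟩ := T.pred_level y hy (ht x) ⟨x, hx, rfl⟩ (U.lt_ht hxy)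
    rcases U.pred_linear (hext.2 hlty0) hxy with h | h | h
    · exact absurd (U.lt_ht h) (by simp [hhy0])
    · rwa [h] at hlty0
    · exact absurd (U.lt_ht h) (by simp [hhy0])
  refine ⟨fun p hp => ⟨hext.1 (hc p hp).1, hext.1 (hc p hp).2⟩, hfg, hig, ?_, hlp, ?_, hnf⟩
  · intro x y x' y' hxy hxy' h
    exact hext.2 (hsi hxy hxy' (hlt (hc _ hxy).1 (hc _ hxy').1 h))
  · intro x y hxy β hβ hβx
    have hx : x ∈ T.elems := (hc _ hxy).1
    have hfin : T.heights.Finite := Set.Finite.subset (T.elems.finite_toSet.image ht)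
      (fun α hα => ⟨hα.2.choose, hα.2.choose_spec.1, hα.2.choose_spec.2⟩)
    have hhx : ht x ∈ T.heights := by
      refine ⟨?_, x, hx, rfl⟩
      exact (lt_of_le_of_lt (pos_iff_ne_zero.mpr hβ.1).le hβx).ne'
    have hβT : β ∈ T.heights := by
      rw [← hh]
      exact ⟨hβ, le_trans hβx.le (le_csSup hfin.bddAbove hhx)⟩
    obtain ⟨x', y', hx', hhx', hltx', hmem⟩ := hdc x y hxy β hβT hβx
    exact ⟨x', y', hext.1 hx', hhx', hext.2 hltx', hmem⟩
end
end

section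
/- Let T be a standard finite tree and f a standard function on T. Then for all a₀, a₁ in the domain of f, ht(a₀ ∧ a₁) = ht(f(a₀) ∧ f(a₁)). -/
noncomputable section
open scoped Classical

open AKST AKST.SFT

namespace AKST
namespace SFT

lemma ht_zero' : ht 0 = 0 := Ordinal.zero_div _

lemma ht_eq_zero_iff' {T : SFT} {x : Ordinal} (hx : x ∈ T.elems) : ht x = 0 ↔ x = 0 := by
  constructor
  · intro h
    rcases T.mem_ok x hx with h0 | ⟨hw, _⟩
    · exact h0
    · exfalso
      have : (0:Ordinal) < x / Ordinal.omega0 :=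
        (Ordinal.div_pos Ordinal.omega0_ne_zero).2 hw
      rw [show x / Ordinal.omega0 = ht x from rfl, h] at this
      exact lt_irrefl _ this
  · rintro rfl; exact ht_zero'

lemma le_mem' {T : SFT} {w x : Ordinal} (h : T.le w x) : w ∈ T.elems := by
  rcases h with h | ⟨_, h⟩
  · exact (T.lt_mem h).1
  · exact h

lemma le_ht' {T : SFT} {w x : Ordinal} (h : T.le w x) : ht w ≤ ht x := by
  rcases h with h | ⟨rfl, _⟩
  · exact (T.lt_ht h).le
  · exact le_rfl

lemma zero_lt' {T : SFT} {x : Ordinal} (hx : x ∈ T.elems) (hne : x ≠ 0) : T.lt 0 x := by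
  have hhx : ht x ≠ 0 := fun h => hne ((ht_eq_zero_iff' hx).1 h)
  have hpos : (0:Ordinal) < ht x := pos_iff_ne_zero.2 hhx
  obtain ⟨y, hy, hhty, hlt⟩ := T.pred_level x hx 0 ⟨0, T.zero_mem, ht_zero'⟩ hpos
  have : y = 0 := (ht_eq_zero_iff' hy).1 hhty
  rwa [this] at hlt

lemma zero_le' {T : SFT} {x : Ordinal} (hx : x ∈ T.elems) : T.le 0 x := by
  by_cases h : x = 0
  · exact Or.inr ⟨h.symm, T.zero_mem⟩
  · exact Or.inl (zero_lt' hx h)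

lemma below_unique' {T : SFT} {x c c' : Ordinal} (h1 : T.le c x) (h2 : T.le c' x)
    (h : ht c = ht c') : c = c' := by
  rcases h1 with h1 | ⟨rfl, _⟩
  · rcases h2 with h2 | ⟨rfl, _⟩
    · rcases T.pred_linear h1 h2 with h3 | h3 | h3
      · exact absurd (h ▸ T.lt_ht h3) (lt_irrefl _)
      · exact h3
      · exact absurd (h ▸ T.lt_ht h3) (lt_irrefl _)
    · exact absurd (h ▸ T.lt_ht h1) (lt_irrefl _)
  · rcases h2 with h2 | ⟨rfl, _⟩
    · exact absurd (h ▸ T.lt_ht h2) (lt_irrefl _)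
    · rfl

lemma exists_isMeet' (T : SFT) {x y : Ordinal} (hx : x ∈ T.elems) (hy : y ∈ T.elems) :
    ∃ z, T.isMeet x y z := by
  classical
  set S := T.elems.filter (fun w => T.le w x ∧ T.le w y) with hS
  have h0 : 0 ∈ S := by
    simp only [hS, Finset.mem_filter]
    exact ⟨T.zero_mem, zero_le' hx, zero_le' hy⟩
  obtain ⟨w, hwS, hmax⟩ := S.exists_max_image ht ⟨0, h0⟩
  rw [hS, Finset.mem_filter] at hwS
  refine ⟨w, hwS.2.1, hwS.2.2, ?_⟩
  intro w' hw'x hw'y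
  have hw'S : w' ∈ S := by
    rw [hS, Finset.mem_filter]; exact ⟨le_mem' hw'x, hw'x, hw'y⟩
  have hhtle : ht w' ≤ ht w := hmax w' hw'S
  rcases hwS.2.1 with hwx | ⟨rfl, _⟩
  · rcases hw'x with hw'x | ⟨rfl, _⟩
    · rcases T.pred_linear hw'x hwx with h3 | h3 | h3
      · exact Or.inl h3
      · exact Or.inr ⟨h3, le_mem' (Or.inl hw'x)⟩
      · exact absurd (T.lt_ht h3) (not_lt.2 hhtle)
    · exact absurd (T.lt_ht hwx) (not_lt.2 hhtle)
  · exact hw'x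

lemma meet_isMeet' {T : SFT} {x y : Ordinal} (hx : x ∈ T.elems) (hy : y ∈ T.elems) :
    T.isMeet x y (T.meet x y) := by
  have h := exists_isMeet' T hx hy
  rw [SFT.meet, dif_pos h]
  exact h.choose_spec

end SFT

/-- Key one-sided lemma. -/
lemma key_le (T : SFT) (f : Set (Ordinal × Ordinal))
    (hcarr : Carr T f) (hfun : FuncGraph f) (hincr : StrictIncr T f)
    (hlev : LevelPres f) (hdc : DownClosedDom T f) :
    ∀ a₀ b₀ a₁ b₁, (a₀, b₀) ∈ f → (a₁, b₁) ∈ f →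
      ht (T.meet a₀ a₁) ≤ ht (T.meet b₀ b₁) := by
  intro a₀ b₀ a₁ b₁ h0 h1
  obtain ⟨ha₀, hb₀⟩ := hcarr _ h0
  obtain ⟨ha₁, hb₁⟩ := hcarr _ h1
  have hc := meet_isMeet' (T := T) ha₀ ha₁
  have hd := meet_isMeet' (T := T) hb₀ hb₁
  set c := T.meet a₀ a₁ with hcdef
  suffices h : ∃ y, T.le y b₀ ∧ T.le y b₁ ∧ ht y = ht c by
    obtain ⟨y, hy0, hy1, hyht⟩ := h
    exact hyht ▸ le_ht' (hd.2.2 y hy0 hy1)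
  have hlev0 : ht a₀ = ht b₀ := hlev _ h0
  have hlev1 : ht a₁ = ht b₁ := hlev _ h1
  rcases hc.1 with hlt0 | ⟨hceq, _⟩
  · rcases hc.2.1 with hlt1 | ⟨hceq, _⟩
    · -- lt c a₀ and lt c a₁
      by_cases hch : ht c = 0
      · exact ⟨0, zero_le' hb₀, zero_le' hb₁, ht_zero'.trans hch.symm⟩
      · have hcmem : c ∈ T.elems := (T.lt_mem hlt0).1
        have hht : ht c ∈ T.heights := ⟨hch, c, hcmem, rfl⟩
        obtain ⟨x', y', hx'mem, hx'ht, hx'lt, hx'f⟩ :=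
          hdc a₀ b₀ h0 (ht c) hht (T.lt_ht hlt0)
        have hx'c : x' = c := below_unique' (Or.inl hx'lt) (Or.inl hlt0) hx'ht
        rw [hx'c] at hx'f hx'lt
        obtain ⟨x'', y'', hx''mem, hx''ht, hx''lt, hx''f⟩ :=
          hdc a₁ b₁ h1 (ht c) hht (T.lt_ht hlt1)
        have hx''c : x'' = c := below_unique' (Or.inl hx''lt) (Or.inl hlt1) hx''ht
        rw [hx''c] at hx''f hx''lt
        have hyy : y' = y'' := hfun hx'f hx''f
        rw [← hyy] at hx''f
        refine ⟨y', Or.inl (hincr hx'f h0 hx'lt), Or.inl (hincr hx''f h1 hx''lt), ?_⟩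
        exact (hlev _ hx'f).symm
    · -- c = a₁, so le a₁ a₀
      rw [hceq]
      rcases hc.1 with hlt | ⟨heq, _⟩
      · rw [hceq] at hlt
        exact ⟨b₁, Or.inl (hincr h1 h0 hlt), Or.inr ⟨rfl, hb₁⟩, hlev1.symm⟩
      · have ha : a₁ = a₀ := hceq.symm.trans heq
        have h1' : (a₀, b₁) ∈ f := by rw [← ha]; exact h1
        have hb : b₀ = b₁ := hfun h0 h1'
        exact ⟨b₁, Or.inr ⟨hb.symm, hb₁⟩, Or.inr ⟨rfl, hb₁⟩, hlev1.symm⟩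
  · -- c = a₀, so le a₀ a₁
    rw [hceq]
    rcases hc.2.1 with hlt | ⟨heq, _⟩
    · rw [hceq] at hlt
      exact ⟨b₀, Or.inr ⟨rfl, hb₀⟩, Or.inl (hincr h0 h1 hlt), hlev0.symm⟩
    · have ha : a₀ = a₁ := hceq.symm.trans heq
      have h1' : (a₀, b₁) ∈ f := by rw [ha]; exact h1
      have hb : b₀ = b₁ := hfun h0 h1'
      exact ⟨b₀, Or.inr ⟨rfl, hb₀⟩, Or.inr ⟨hb, hb₀⟩, hlev0.symm⟩

end AKST

/-- a standard function preserves heights of meets. -/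
theorem stmt_19 (T : SFT) (f : Set (Ordinal × Ordinal)) (hf : IsStdFun T f) :
    ∀ a₀ b₀ a₁ b₁, (a₀, b₀) ∈ f → (a₁, b₁) ∈ f →
      ht (T.meet a₀ a₁) = ht (T.meet b₀ b₁) := by
  obtain ⟨hcarr, hfun, hinj, hincr, hlev, hdc, -⟩ := hf
  intro a₀ b₀ a₁ b₁ h0 h1
  set g : Set (Ordinal × Ordinal) := {p | (p.2, p.1) ∈ f} with hg
  have hgcarr : Carr T g := fun p hp => ⟨(hcarr _ hp).2, (hcarr _ hp).1⟩
  have hgfun : FuncGraph g := fun {x y y'} h h' => hinj h h'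
  have hglev : LevelPres g := fun p hp => (hlev _ hp).symm
  have hgincr : StrictIncr T g := by
    intro u v u' v' h h' hlt
    -- h : (v, u) ∈ f, h' : (v', u') ∈ f, hlt : T.lt u u'; goal: T.lt v v'
    have h : (v, u) ∈ f := h
    have h' : (v', u') ∈ f := h'
    obtain ⟨hv, hu⟩ := hcarr _ h
    obtain ⟨hv', hu'⟩ := hcarr _ h'
    have hvu : ht v = ht u := hlev _ h
    have hvu' : ht v' = ht u' := hlev _ h'
    by_cases hu0 : ht u = 0
    · have hueq : u = 0 := (ht_eq_zero_iff' hu).1 hu0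
      have hveq : v = 0 := (ht_eq_zero_iff' hv).1 (hvu.trans hu0)
      have hv'ne : v' ≠ 0 := by
        intro hv'0
        have : ht u' = 0 := hvu' ▸ (hv'0 ▸ ht_zero' : ht v' = 0)
        exact absurd (this ▸ T.lt_ht hlt) (by simp [hu0, this])
      exact hveq ▸ zero_lt' hv' hv'ne
    · have hht : ht u ∈ T.heights := ⟨hu0, u, hu, rfl⟩
      have hlt' : ht u < ht v' := hvu' ▸ T.lt_ht hlt
      obtain ⟨w, z, hwmem, hwht, hwlt, hwf⟩ := hdc v' u' h' (ht u) hht hlt'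
      have hzlt : T.lt z u' := hincr hwf h' hwlt
      have hzht : ht z = ht u := (hlev _ hwf).symm.trans hwht
      have hzu : z = u := below_unique' (Or.inl hzlt) (Or.inl hlt) hzht
      subst hzu
      have : w = v := hinj hwf h
      exact this ▸ hwlt
  have hgdc : DownClosedDom T g := by
    intro x y hxy β hβ hβlt
    have hxy : (y, x) ∈ f := hxy
    have hyx : ht y = ht x := hlev _ hxy
    obtain ⟨w, z, hwmem, hwht, hwlt, hwf⟩ := hdc y x hxy β hβ (hyx ▸ hβlt)
    have hzlt : T.lt z x := hincr hwf hxy hwlt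
    have hzht : ht z = β := (hlev _ hwf).symm.trans hwht
    exact ⟨z, w, (hcarr _ hwf).2, hzht, hzlt, hwf⟩
  exact le_antisymm
    (key_le T f hcarr hfun hincr hlev hdc a₀ b₀ a₁ b₁ h0 h1)
    (key_le T g hgcarr hgfun hgincr hglev hgdc b₀ a₀ b₁ a₁ h0 h1)
end
end
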